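/- Fix real numbers b, h, b', h' with 0 < b' < b and 0 < h' < h. Define, for λ large enough so that λ² h'² − λ^{2/3}(b² − b'²) > 0, A_λ = (λ² h'² + λ^{2/3} b'²)·( arctan( λ^{1/3} b / √(λ² h'² − λ^{2/3}(b² − b'²)) ) − λ^{1/3} b · √(λ² h'² − λ^{2/3}(b² − b'²)) / (λ² h'² + λ^{2/3} b'²) ) − (λ² h² + λ^{2/3} b²)·( arctan( λ^{-2/3} b / h ) − λ^{-2/3} (b/h) · (1 + λ^{-4/3} b²/h²)^{-1} ). Then A_λ converges, as λ → ∞, to (2/3)·b³·(1/h' − 1/h). -/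

import Mathlib

/-!
Put `q = λ^{1/3}`. Both terms of `A_λ` have the shape `a² ((1 + y²) arctan y - y)`: the first with
`a = q³ W`, `y = b / (q² W)`, where `W = √(h'² - (b² - b'²) / q⁴)`, the second with `a = q³ h`,
`y = b / (q² h)`. Since `a² y³` equals `b³ / W`, resp. `b³ / h`, and `((1 + y²) arctan y - y) / y³ → 2/3`
as `y → 0` (L'Hôpital), `A_λ → (2/3) b³ (1/h' - 1/h)` because `W → h'`.
-/

open Real Filter

/-- The area `A_λ = |Δ_n^{(λ)}|₂` of the difference of two circular caps. -/
noncomputable def Alam (lam b h b' h' : ℝ) : ℝ :=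
  (lam ^ 2 * h' ^ 2 + lam ^ ((2 : ℝ) / 3) * b' ^ 2) *
      (Real.arctan (lam ^ ((1 : ℝ) / 3) * b /
          Real.sqrt (lam ^ 2 * h' ^ 2 - lam ^ ((2 : ℝ) / 3) * (b ^ 2 - b' ^ 2))) -
        lam ^ ((1 : ℝ) / 3) * b *
          Real.sqrt (lam ^ 2 * h' ^ 2 - lam ^ ((2 : ℝ) / 3) * (b ^ 2 - b' ^ 2)) /
          (lam ^ 2 * h' ^ 2 + lam ^ ((2 : ℝ) / 3) * b' ^ 2)) -
    (lam ^ 2 * h ^ 2 + lam ^ ((2 : ℝ) / 3) * b ^ 2) *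
      (Real.arctan (lam ^ (-(2 : ℝ) / 3) * b / h) -
        lam ^ (-(2 : ℝ) / 3) * (b / h) * (1 + lam ^ (-(4 : ℝ) / 3) * b ^ 2 / h ^ 2)⁻¹)

open scoped Topology

noncomputable def capRatio (y : ℝ) : ℝ := ((1 + y ^ 2) * arctan y - y) / y ^ 3

theorem tendsto_arctan_div_self : Tendsto (fun y => arctan y / y) (𝓝[≠] 0) (𝓝 1) := by
  simpa [div_eq_inv_mul] using (hasDerivAt_arctan 0).tendsto_slope_zero

theorem tendsto_capRatio : Tendsto capRatio (𝓝[≠] 0) (𝓝 (2 / 3)) := by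
  refine HasDerivAt.lhopital_zero_nhdsNE (f' := fun y => 2 * y * arctan y)
    (g' := fun y => 3 * y ^ 2) ?_ ?_ ?_ ?_ ?_ ?_
  · refine Eventually.of_forall fun y => ?_
    have hpos : 1 + y ^ 2 ≠ 0 := by positivity
    refine ((((hasDerivAt_pow 2 y).const_add 1).mul (hasDerivAt_arctan y)).sub
      (hasDerivAt_id' y)).congr_deriv ?_
    field_simp
    ring
  · exact Eventually.of_forall fun y => by simpa using hasDerivAt_pow 3 y
  · filter_upwards [self_mem_nhdsWithin] with y hy
    exact mul_ne_zero three_ne_zero (pow_ne_zero 2 hy)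
  · refine tendsto_nhdsWithin_of_tendsto_nhds ?_
    exact (by fun_prop : Continuous fun y : ℝ => (1 + y ^ 2) * arctan y - y).tendsto' 0 0 (by simp)
  · exact tendsto_nhdsWithin_of_tendsto_nhds ((continuous_pow 3).tendsto' 0 0 (by simp))
  · have h := tendsto_arctan_div_self.const_mul (2 / 3)
    rw [mul_one] at h
    refine h.congr' ?_
    filter_upwards [self_mem_nhdsWithin] with y hy
    field_simp

theorem one_add_sq_mul_arctan_sub_eq (y : ℝ) :
    (1 + y ^ 2) * arctan y - y = y ^ 3 * capRatio y := by
  rcases eq_or_ne y 0 with rfl | hy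
  · simp
  · rw [capRatio, mul_div_cancel₀ _ (pow_ne_zero 3 hy)]

theorem sq_mul_one_add_sq_mul_arctan_sub_eq (a y : ℝ) :
    a ^ 2 * (1 + y ^ 2) * (arctan y - y / (1 + y ^ 2)) = a ^ 2 * y ^ 3 * capRatio y := by
  have hpos : 1 + y ^ 2 ≠ 0 := by positivity
  rw [mul_assoc, mul_sub, mul_div_cancel₀ _ hpos, one_add_sq_mul_arctan_sub_eq, mul_assoc]

theorem pow_three_rpow {q : ℝ} (hq : 0 ≤ q) (x : ℝ) : (q ^ 3) ^ x = q ^ (3 * x) := by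
  rw [← rpow_natCast, ← rpow_mul hq, Nat.cast_ofNat]

theorem Alam_pow_three_eq {q b h b' h' W : ℝ} (hq : 0 < q) (hh : h ≠ 0) (hW : 0 < W)
    (hW2 : W ^ 2 = h' ^ 2 - (b ^ 2 - b' ^ 2) / q ^ 4) :
    Alam (q ^ 3) b h b' h' =
      b ^ 3 / W * capRatio (b / (q ^ 2 * W)) - b ^ 3 / h * capRatio (b / (q ^ 2 * h)) := by
  have e1 : (q ^ 3) ^ ((1 : ℝ) / 3) = q := by rw [pow_three_rpow hq.le]; norm_num
  have e2 : (q ^ 3) ^ ((2 : ℝ) / 3) = q ^ 2 := by rw [pow_three_rpow hq.le]; norm_num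
  have e3 : (q ^ 3) ^ (-(2 : ℝ) / 3) = (q ^ 2)⁻¹ := by
    rw [pow_three_rpow hq.le]; norm_num [rpow_neg hq.le]
  have e4 : (q ^ 3) ^ (-(4 : ℝ) / 3) = (q ^ 4)⁻¹ := by
    rw [pow_three_rpow hq.le]; norm_num [rpow_neg hq.le]
  have hW4 : q ^ 4 * W ^ 2 = q ^ 4 * h' ^ 2 - (b ^ 2 - b' ^ 2) := by
    rw [hW2]; field_simp
  have hsqrt : √((q ^ 3) ^ 2 * h' ^ 2 - q ^ 2 * (b ^ 2 - b' ^ 2)) = q ^ 3 * W := by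
    rw [sqrt_eq_iff_mul_self_eq_of_pos (by positivity)]
    linear_combination q ^ 2 * hW4
  have hE1 : (q ^ 3) ^ 2 * h' ^ 2 + q ^ 2 * b' ^ 2 =
      (q ^ 3 * W) ^ 2 * (1 + (b / (q ^ 2 * W)) ^ 2) := by
    rw [mul_add, mul_one, show (q ^ 3 * W) ^ 2 * (b / (q ^ 2 * W)) ^ 2 = q ^ 2 * b ^ 2 by
      field_simp]
    linear_combination (-q ^ 2) * hW4
  have hE2 : (q ^ 3) ^ 2 * h ^ 2 + q ^ 2 * b ^ 2 =
      (q ^ 3 * h) ^ 2 * (1 + (b / (q ^ 2 * h)) ^ 2) := by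
    field_simp
  have first : ((q ^ 3) ^ 2 * h' ^ 2 + q ^ 2 * b' ^ 2) *
      (arctan (q * b / (q ^ 3 * W)) -
        q * b * (q ^ 3 * W) / ((q ^ 3) ^ 2 * h' ^ 2 + q ^ 2 * b' ^ 2)) =
      b ^ 3 / W * capRatio (b / (q ^ 2 * W)) := by
    rw [hE1, show q * b / (q ^ 3 * W) = b / (q ^ 2 * W) by field_simp,
      show q * b * (q ^ 3 * W) / ((q ^ 3 * W) ^ 2 * (1 + (b / (q ^ 2 * W)) ^ 2)) =
        b / (q ^ 2 * W) / (1 + (b / (q ^ 2 * W)) ^ 2) by field_simp,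
      sq_mul_one_add_sq_mul_arctan_sub_eq]
    field_simp
  have second : ((q ^ 3) ^ 2 * h ^ 2 + q ^ 2 * b ^ 2) *
      (arctan ((q ^ 2)⁻¹ * b / h) - (q ^ 2)⁻¹ * (b / h) * (1 + (q ^ 4)⁻¹ * b ^ 2 / h ^ 2)⁻¹) =
      b ^ 3 / h * capRatio (b / (q ^ 2 * h)) := by
    rw [hE2, show (q ^ 2)⁻¹ * b / h = b / (q ^ 2 * h) by ring,
      show (q ^ 2)⁻¹ * (b / h) * (1 + (q ^ 4)⁻¹ * b ^ 2 / h ^ 2)⁻¹ =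
        b / (q ^ 2 * h) / (1 + (b / (q ^ 2 * h)) ^ 2) by ring,
      sq_mul_one_add_sq_mul_arctan_sub_eq]
    field_simp
  rw [Alam, e1, e2, e3, e4, hsqrt, first, second]

theorem tendsto_div_sq_mul_nhdsNE {b w₀ : ℝ} {w : ℝ → ℝ} (hb : b ≠ 0)
    (hw : Tendsto w atTop (𝓝 w₀)) (hw₀ : 0 < w₀) :
    Tendsto (fun q => b / (q ^ 2 * w q)) atTop (𝓝[≠] 0) := by
  have hden : Tendsto (fun q => q ^ 2 * w q) atTop atTop :=
    (tendsto_pow_atTop two_ne_zero).atTop_mul_pos hw₀ hw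
  refine tendsto_nhdsWithin_iff.2 ⟨tendsto_const_nhds.div_atTop hden, ?_⟩
  filter_upwards [hden.eventually_gt_atTop 0] with q hq using div_ne_zero hb hq.ne'

/-- `A_λ → (2/3) b³ (1/h' − 1/h)` as `λ → ∞`. -/
theorem Alam_tendsto (b h b' h' : ℝ) (hb' : 0 < b') (hb'b : b' < b) (hh' : 0 < h') (hh'h : h' < h) :
    Tendsto (fun lam : ℝ => Alam lam b h b' h') atTop
      (nhds (2 / 3 * b ^ 3 * (1 / h' - 1 / h))) := by
  have hb : 0 < b := hb'.trans hb'b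
  have hh : 0 < h := hh'.trans hh'h
  set W : ℝ → ℝ := fun q => √(h' ^ 2 - (b ^ 2 - b' ^ 2) / q ^ 4)
  have hW : Tendsto W atTop (𝓝 h') := by
    have := (tendsto_const_nhds (x := h' ^ 2)).sub
      ((tendsto_const_nhds (x := b ^ 2 - b' ^ 2)).div_atTop (tendsto_pow_atTop four_ne_zero))
    simpa [sqrt_sq hh'.le] using this.sqrt
  have hlim : Tendsto (fun q => b ^ 3 / W q * capRatio (b / (q ^ 2 * W q)) -
      b ^ 3 / h * capRatio (b / (q ^ 2 * h))) atTop
      (𝓝 (b ^ 3 / h' * (2 / 3) - b ^ 3 / h * (2 / 3))) :=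
    ((tendsto_const_nhds.div hW hh'.ne').mul
      (tendsto_capRatio.comp (tendsto_div_sq_mul_nhdsNE hb.ne' hW hh'))).sub
      (tendsto_const_nhds.mul
        (tendsto_capRatio.comp (tendsto_div_sq_mul_nhdsNE hb.ne' tendsto_const_nhds hh)))
  have hcbrt : Tendsto (fun lam : ℝ => lam ^ ((1 : ℝ) / 3)) atTop atTop :=
    tendsto_rpow_atTop (by norm_num)
  rw [show 2 / 3 * b ^ 3 * (1 / h' - 1 / h) = b ^ 3 / h' * (2 / 3) - b ^ 3 / h * (2 / 3) by ring]
  refine (hlim.comp hcbrt).congr' ?_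
  filter_upwards [hcbrt.eventually (eventually_gt_atTop 0),
    hcbrt.eventually (hW.eventually_const_lt hh'), eventually_ge_atTop 0] with lam hq hWq hlam
  have hcube : (lam ^ ((1 : ℝ) / 3)) ^ 3 = lam := by
    rw [← rpow_natCast, ← rpow_mul hlam]; norm_num
  rw [Function.comp_apply, ← Alam_pow_three_eq hq hh.ne' hWq (sq_sqrt (sqrt_pos.1 hWq).le), hcube]
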